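/- Let X be a complex Banach space, T a bounded linear operator on X, and P a bounded projection (P ∘ P = P) on X with PT = TP = P. If T has a spectral gap, i.e. δ_P(T) < 1, then T is uniformly P-ergodic; more precisely, ‖Tⁿ − P‖ ≤ (δ_P(T))ⁿ · ‖I − P‖ for every n ≥ 1, so ‖Tⁿ − P‖ → 0 as n → ∞. -/

import Mathlib

/-!
Since `T P = P`, we have `Tⁿ - P = Tⁿ (1 - P)`, and `1 - P` maps into `ker P` because `P` is
idempotent. As `P T = P`, the operator `T` preserves `ker P` and contracts it by the factor
`δ_P(T)`, so `Tⁿ` contracts `ker P` by `δ_P(T)ⁿ`.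
-/

open Filter Topology

/-- The generalized Dobrushin ergodicity coefficient of `T` with respect to `P`:
`δ_P(T) = sup {‖T x‖ : P x = 0, ‖x‖ ≤ 1}`. -/
noncomputable def dobrushinCoeff {X : Type*} [NormedAddCommGroup X] [NormedSpace ℂ X]
    (P T : X →L[ℂ] X) : ℝ :=
  sSup {r : ℝ | ∃ x : X, P x = 0 ∧ ‖x‖ ≤ 1 ∧ r = ‖T x‖}

theorem pow_mul_eq_of_mul_eq {M : Type*} [Monoid M] {a b : M} (h : a * b = b) (n : ℕ) :
    a ^ n * b = b := by
  induction n with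
  | zero => rw [pow_zero, one_mul]
  | succ n ih => rw [pow_succ', mul_assoc, ih, h]

section Contraction

variable {𝕜 E : Type*} [NontriviallyNormedField 𝕜] [SeminormedAddCommGroup E] [NormedSpace 𝕜 E]
  {T P : E →L[𝕜] E} {c : ℝ}

theorem norm_pow_apply_le_of_ker_contraction (hPT : P * T = P) (hc0 : 0 ≤ c)
    (hc : ∀ y, P y = 0 → ‖T y‖ ≤ c * ‖y‖) (n : ℕ) {y : E} (hy : P y = 0) :
    ‖(T ^ n) y‖ ≤ c ^ n * ‖y‖ := by
  induction n generalizing y with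
  | zero => simp
  | succ n ih =>
    have hTy : P (T y) = 0 := by rw [← mul_apply_eq_comp, hPT, hy]
    calc ‖(T ^ (n + 1)) y‖ = ‖(T ^ n) (T y)‖ := by rw [pow_succ, mul_apply_eq_comp]
      _ ≤ c ^ n * ‖T y‖ := ih hTy
      _ ≤ c ^ n * (c * ‖y‖) := by gcongr; exact hc y hy
      _ = c ^ (n + 1) * ‖y‖ := by ring

theorem norm_pow_sub_le_of_ker_contraction (hProj : P * P = P) (hPT : P * T = P)
    (hTP : T * P = P) (hc0 : 0 ≤ c) (hc : ∀ y, P y = 0 → ‖T y‖ ≤ c * ‖y‖) (n : ℕ) :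
    ‖T ^ n - P‖ ≤ c ^ n * ‖1 - P‖ := by
  have hfactor : T ^ n - P = T ^ n * (1 - P) := by
    rw [mul_sub, mul_one, pow_mul_eq_of_mul_eq hTP]
  have hker (x : E) : P ((1 - P) x) = 0 := by
    rw [← mul_apply_eq_comp, mul_sub, mul_one, hProj, sub_self, zero_apply]
  refine (T ^ n - P).opNorm_le_bound (by positivity) fun x => ?_
  calc ‖(T ^ n - P) x‖ = ‖(T ^ n) ((1 - P) x)‖ := by rw [hfactor, mul_apply_eq_comp]
    _ ≤ c ^ n * ‖(1 - P) x‖ := norm_pow_apply_le_of_ker_contraction hPT hc0 hc n (hker x)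
    _ ≤ c ^ n * (‖1 - P‖ * ‖x‖) := by gcongr; exact (1 - P).le_opNorm x
    _ = c ^ n * ‖1 - P‖ * ‖x‖ := (mul_assoc _ _ _).symm

end Contraction

section Dobrushin

variable {X : Type*} [NormedAddCommGroup X] [NormedSpace ℂ X] {P T : X →L[ℂ] X}

theorem dobrushinCoeff_nonneg : 0 ≤ dobrushinCoeff P T :=
  Real.sSup_nonneg fun _ ⟨_, _, _, hr⟩ => hr ▸ norm_nonneg _

theorem bddAbove_dobrushinCoeff_set :
    BddAbove {r : ℝ | ∃ x : X, P x = 0 ∧ ‖x‖ ≤ 1 ∧ r = ‖T x‖} := by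
  refine ⟨‖T‖, ?_⟩
  rintro _ ⟨x, -, hx, rfl⟩
  simpa using T.le_opNorm_of_le hx

theorem norm_apply_le_dobrushinCoeff_mul {x : X} (hx : P x = 0) :
    ‖T x‖ ≤ dobrushinCoeff P T * ‖x‖ := by
  rcases eq_or_ne x 0 with rfl | hx0
  · simp
  have hpos : 0 < ‖x‖ := norm_pos_iff.mpr hx0
  set u : X := (‖x‖⁻¹ : ℂ) • x
  have hu : ‖T u‖ ≤ dobrushinCoeff P T := by
    refine le_csSup bddAbove_dobrushinCoeff_set ⟨u, by simp [u, hx], ?_, rfl⟩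
    simp [u, norm_smul, hpos.ne']
  have hTu : ‖T u‖ = ‖x‖⁻¹ * ‖T x‖ := by simp [u, norm_smul]
  rw [hTu, inv_mul_le_iff₀ hpos] at hu
  linarith

end Dobrushin

theorem stmt12_general {X : Type*} [NormedAddCommGroup X] [NormedSpace ℂ X]
    (T P : X →L[ℂ] X)
    (hProj : P.comp P = P) (hPT : P.comp T = P) (hTP : T.comp P = P)
    (hGap : dobrushinCoeff P T < 1) :
    (∀ n : ℕ, 1 ≤ n → ‖T ^ n - P‖ ≤ (dobrushinCoeff P T) ^ n * ‖(1 : X →L[ℂ] X) - P‖) ∧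
    Tendsto (fun n : ℕ => ‖T ^ n - P‖) atTop (𝓝 0) := by
  have hbound (n : ℕ) : ‖T ^ n - P‖ ≤ (dobrushinCoeff P T) ^ n * ‖(1 : X →L[ℂ] X) - P‖ :=
    norm_pow_sub_le_of_ker_contraction hProj hPT hTP dobrushinCoeff_nonneg
      (fun _ => norm_apply_le_dobrushinCoeff_mul) n
  refine ⟨fun n _ => hbound n, squeeze_zero (fun _ => norm_nonneg _) hbound ?_⟩
  simpa using (tendsto_pow_atTop_nhds_zero_of_lt_one dobrushinCoeff_nonneg hGap).mul_const
    ‖(1 : X →L[ℂ] X) - P‖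

theorem stmt12 {X : Type*} [NormedAddCommGroup X] [NormedSpace ℂ X] [CompleteSpace X]
    (T P : X →L[ℂ] X)
    (hProj : P.comp P = P) (hPT : P.comp T = P) (hTP : T.comp P = P)
    (hGap : dobrushinCoeff P T < 1) :
    (∀ n : ℕ, 1 ≤ n → ‖T ^ n - P‖ ≤ (dobrushinCoeff P T) ^ n * ‖(1 : X →L[ℂ] X) - P‖) ∧
    Tendsto (fun n : ℕ => ‖T ^ n - P‖) atTop (𝓝 0) :=
  stmt12_general T P hProj hPT hTP hGap
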